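/- The Schulz identity for the tetrahedroid: 16c²·T_{a,b,c}(x₀,x₁,x₂,x₃) = −((L₁L₁′ + L₂L₂′ − L₃L₃′)² − 4L₁L₁′L₂L₂′), where L₁ = −(a−b+c)(c x₀ + x₂ + x₃), L₁′ = (−a+b+c)(−c x₀ + x₂ + x₃), L₂ = (a+b+c)(c x₀ + x₂ − x₃), L₂′ = (a+b−c)(−c x₀ + x₂ − x₃), L₃ = 2(−c x₁ − b x₂ + a x₃), L₃′ = 2(c x₁ − b x₂ + a x₃). -/

import Mathlib

/-!
Bordering the Cayley–Menger matrix `M` of the triangle with squared sides `a², b², c²` by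
`v = (X₀², …, X₃²)` gives `det = -vᵀ (adj M) v`, so `T_{a,b,c}` is an explicit quadratic form in
the `Xᵢ²`. Multiplied by `16c²`, that form agrees with Schulz's expression as a polynomial.
-/

/-- Half the 5×5 tetrahedroid determinant `T_{a,b,c}`. -/
noncomputable def T (a b c X0 X1 X2 X3 : ℝ) : ℝ :=
  Matrix.det !![(0 : ℝ), 1, 1, 1, X0^2;
                1, 0, a^2, b^2, X1^2;
                1, a^2, 0, c^2, X2^2;
                1, b^2, c^2, 0, X3^2;
                X0^2, X1^2, X2^2, X3^2, 0] / 2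

theorem det_cayleyMenger_triangle_bordered {R : Type*} [CommRing R] (A B C y0 y1 y2 y3 : R) :
    !![0, 1, 1, 1, y0;
       1, 0, A, B, y1;
       1, A, 0, C, y2;
       1, B, C, 0, y3;
       y0, y1, y2, y3, 0].det =
      2 * (C * (A + B - C) * y0 * y1 + B * (A + C - B) * y0 * y2 + A * (B + C - A) * y0 * y3
        + (B + C - A) * y1 * y2 + (A + C - B) * y1 * y3 + (A + B - C) * y2 * y3
        - (A * B * C * y0 ^ 2 + C * y1 ^ 2 + B * y2 ^ 2 + A * y3 ^ 2)) := by
  simp [Matrix.det_succ_row_zero, Fin.sum_univ_succ, Fin.succAbove]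
  ring

/-- Schulz' identity for the tetrahedroid. -/
theorem schulz_identity (a b c x0 x1 x2 x3 : ℝ) :
    let L1 := -(a - b + c) * (c*x0 + x2 + x3)
    let L1' := (-a + b + c) * (-c*x0 + x2 + x3)
    let L2 := (a + b + c) * (c*x0 + x2 - x3)
    let L2' := (a + b - c) * (-c*x0 + x2 - x3)
    let L3 := 2 * (-c*x1 - b*x2 + a*x3)
    let L3' := 2 * (c*x1 - b*x2 + a*x3)
    16 * c^2 * T a b c x0 x1 x2 x3 =
      -((L1*L1' + L2*L2' - L3*L3')^2 - 4 * (L1*L1') * (L2*L2')) := by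
  intro L1 L1' L2 L2' L3 L3'
  rw [T, det_cayleyMenger_triangle_bordered]
  ring
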